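/- (Proposition 2.6) If constructions G and H are ρ-equivalent, then YX(G)=YX(H) for every X in {W,E} and Y in {N,S}. -/

import Mathlib

namespace PluralCuts

/-- The two horizontal directions: west and east. -/
inductive XDir : Type
  | W
  | E
deriving DecidableEq

/-- The two vertical directions: north and south. -/
inductive YDir : Type
  | N
  | S
deriving DecidableEq

/-- The other element of `{W, E}`. -/
def XDir.other : XDir → XDir
  | .W => .E
  | .E => .W

/-- A helper choosing between two values according to an `XDir`. -/
def pick {α : Type*} (w e : α) : XDir → α
  | .W => w
  | .E => e

/-- A digraph on (a finite set of) natural-number vertices: a finite set of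
vertices together with a finite set of edges (ordered pairs). -/
structure DG : Type where
  verts : Finset ℕ
  edges : Finset (ℕ × ℕ)

namespace DG

/-- `D` is an oriented graph: edges lie between vertices, the edge relation is
irreflexive and antisymmetric, and the vertex set is nonempty. -/
def IsOriented (D : DG) : Prop :=
  (∀ e ∈ D.edges, e.1 ∈ D.verts ∧ e.2 ∈ D.verts) ∧
  (∀ e ∈ D.edges, e.1 ≠ e.2) ∧
  (∀ a b : ℕ, (a, b) ∈ D.edges → (b, a) ∉ D.edges) ∧
  D.verts.Nonempty

/-- A `W`-vertex: no edge ends in it. -/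
def isWVert (D : DG) (a : ℕ) : Prop := a ∈ D.verts ∧ ∀ b, (b, a) ∉ D.edges

/-- An `E`-vertex: no edge begins in it. -/
def isEVert (D : DG) (a : ℕ) : Prop := a ∈ D.verts ∧ ∀ b, (a, b) ∉ D.edges

/-- An inner vertex: some edge ends in it and some edge begins in it. -/
def isInner (D : DG) (a : ℕ) : Prop :=
  a ∈ D.verts ∧ (∃ b, (b, a) ∈ D.edges) ∧ (∃ b, (a, b) ∈ D.edges)

/-- A `W`-edge: an edge beginning in a `W`-vertex. -/
def isWEdge (D : DG) (e : ℕ × ℕ) : Prop := e ∈ D.edges ∧ D.isWVert e.1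

/-- An `E`-edge: an edge ending in an `E`-vertex. -/
def isEEdge (D : DG) (e : ℕ × ℕ) : Prop := e ∈ D.edges ∧ D.isEVert e.2

/-- An `X`-edge, for `X ∈ {W, E}`. -/
def isXEdge (D : DG) : XDir → (ℕ × ℕ) → Prop
  | .W => D.isWEdge
  | .E => D.isEEdge

/-- An inner edge: it begins and ends in inner vertices. -/
def isInnerEdge (D : DG) (e : ℕ × ℕ) : Prop :=
  e ∈ D.edges ∧ D.isInner e.1 ∧ D.isInner e.2

/-- A functional `W`-edge `(a,b)`: `(a,c) ∈ D` implies `b = c`. -/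
def funcWEdge (D : DG) (e : ℕ × ℕ) : Prop :=
  D.isWEdge e ∧ ∀ c, (e.1, c) ∈ D.edges → c = e.2

/-- A functional `E`-edge `(b,a)`: `(c,a) ∈ D` implies `b = c`. -/
def funcEEdge (D : DG) (e : ℕ × ℕ) : Prop :=
  D.isEEdge e ∧ ∀ c, (c, e.2) ∈ D.edges → c = e.1

/-- `D` is `W`-`E`-functional: all its `W`-edges and `E`-edges are functional. -/
def WEFunctional (D : DG) : Prop :=
  (∀ e, D.isWEdge e → D.funcWEdge e) ∧ (∀ e, D.isEEdge e → D.funcEEdge e)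

/-- Semi-adjacency: `(a,b)` or `(b,a)` is an edge. -/
def semiAdj (D : DG) (a b : ℕ) : Prop := (a, b) ∈ D.edges ∨ (b, a) ∈ D.edges

/-- A semipath: a nonempty sequence of mutually distinct vertices in which any
two consecutive vertices are semi-adjacent. -/
def IsSemipath (D : DG) (l : List ℕ) : Prop :=
  l ≠ [] ∧ (∀ a ∈ l, a ∈ D.verts) ∧ l.Nodup ∧ l.Chain' D.semiAdj

/-- A path: a nonempty sequence of mutually distinct vertices in which
`(a_i, a_{i+1})` is an edge for consecutive vertices. -/
def IsPath (D : DG) (l : List ℕ) : Prop :=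
  l ≠ [] ∧ (∀ a ∈ l, a ∈ D.verts) ∧ l.Nodup ∧
    l.Chain' (fun a b => (a, b) ∈ D.edges)

/-- A semicycle: a sequence `a_1, ..., a_n` of vertices with `n ≥ 4`,
`a_1 = a_n`, `a_1, ..., a_{n-1}` mutually distinct, and consecutive vertices
semi-adjacent. -/
def IsSemicycle (D : DG) (l : List ℕ) : Prop :=
  4 ≤ l.length ∧ (∀ a ∈ l, a ∈ D.verts) ∧ l.head? = l.getLast? ∧
  l.dropLast.Nodup ∧ l.Chain' D.semiAdj

/-- `D` is weakly connected: every two vertices are joined by a semipath. -/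
def WeaklyConnected (D : DG) : Prop :=
  ∀ a ∈ D.verts, ∀ b ∈ D.verts,
    ∃ l, D.IsSemipath l ∧ l.head? = some a ∧ l.getLast? = some b

/-- `D` is asemicyclic: it has no semicycles. -/
def Asemicyclic (D : DG) : Prop := ∀ l, ¬ D.IsSemicycle l

/-- The cut `D_W[e_W - e_E]D_E`:
`(D_W - {e_W}) ∪ (D_E - {e_E}) ∪ {(e_W.1, e_E.2)}` on the union of the vertex
sets with `e_W.2` and `e_E.1` omitted. -/
def cut (DW DE : DG) (eW eE : ℕ × ℕ) : DG where
  verts := (DW.verts ∪ DE.verts) \ {eW.2, eE.1}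
  edges := insert (eW.1, eE.2) ((DW.edges.erase eW) ∪ (DE.edges.erase eE))

end DG

/-- The type of assignments of four distinguished edges `NW, SW, NE, SE`. -/
abbrev DistE : Type := YDir → XDir → ℕ × ℕ

/-- The type of labellings assigning to (inner) vertices four edges. -/
abbrev Lab : Type := ℕ → YDir → XDir → ℕ × ℕ

/-- `⟨D, ε⟩` is a basic K-graph: `D` is an oriented graph with a single inner
vertex `b`, all edges begin or end in `b`, every other vertex is joined to `b`
by an edge, there is at least one edge ending in `b` and one beginning in `b`,
the distinguished edges `ε Y W` end in `b` and `ε Y E` begin in `b`, and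
(XYB): if there are at least two `X`-edges then `NX ≠ SX`. -/
def IsBasicK (D : DG) (ε : DistE) : Prop :=
  D.IsOriented ∧
  ∃ b ∈ D.verts,
    (∀ e ∈ D.edges, e.1 = b ∨ e.2 = b) ∧
    (∀ v ∈ D.verts, v = b ∨ (v, b) ∈ D.edges ∨ (b, v) ∈ D.edges) ∧
    (∃ a, (a, b) ∈ D.edges) ∧ (∃ c, (b, c) ∈ D.edges) ∧
    (∀ Y : YDir, ε Y XDir.W ∈ D.edges ∧ (ε Y XDir.W).2 = b ∧
      ε Y XDir.E ∈ D.edges ∧ (ε Y XDir.E).1 = b) ∧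
    (2 ≤ (D.edges.filter (fun e => e.2 = b)).card →
      ε YDir.N XDir.W ≠ ε YDir.S XDir.W) ∧
    (2 ≤ (D.edges.filter (fun e => e.1 = b)).card →
      ε YDir.N XDir.E ≠ ε YDir.S XDir.E)

/-- `⟨D, ε⟩` is a basic Q-graph: as a basic K-graph but with no requirement
(XYB) on the distinguished edges. -/
def IsBasicQ (D : DG) (ε : DistE) : Prop :=
  D.IsOriented ∧
  ∃ b ∈ D.verts,
    (∀ e ∈ D.edges, e.1 = b ∨ e.2 = b) ∧
    (∀ v ∈ D.verts, v = b ∨ (v, b) ∈ D.edges ∨ (b, v) ∈ D.edges) ∧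
    (∃ a, (a, b) ∈ D.edges) ∧ (∃ c, (b, c) ∈ D.edges) ∧
    (∀ Y : YDir, ε Y XDir.W ∈ D.edges ∧ (ε Y XDir.W).2 = b ∧
      ε Y XDir.E ∈ D.edges ∧ (ε Y XDir.E).1 = b)

/-- Finite binary trees whose nodes carry an oriented graph, four
distinguished edges, and (at internal nodes) the two cut edges. -/
inductive CTree : Type
  | leaf (D : DG) (ε : DistE)
  | node (D : DG) (ε : DistE) (eW eE : ℕ × ℕ) (l r : CTree)

namespace CTree

/-- The graph at the root of the tree. -/
def rootGraph : CTree → DG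
  | .leaf D _ => D
  | .node D _ _ _ _ _ => D

/-- The distinguished edges at the root of the tree. -/
def dist : CTree → DistE
  | .leaf _ ε => ε
  | .node _ ε _ _ _ _ => ε

/-- The list of graphs-with-distinguished-edges at the leaves of the tree
(the basic K-graphs determining the leaves of a construction). -/
def leaves : CTree → List (DG × DistE)
  | .leaf D ε => [(D, ε)]
  | .node _ _ _ _ l r => l.leaves ++ r.leaves

end CTree

/-- The tree `G_W[e_W - e_E]G_E`, whose root graph is the cut of the root
graphs and whose distinguished edges are given by (XYD). -/
def mkNode (GW GE : CTree) (eW eE : ℕ × ℕ) : CTree :=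
  .node (DG.cut GW.rootGraph GE.rootGraph eW eE)
    (fun Y X =>
      match X with
      | .W => if eE = GE.dist Y XDir.W then GW.dist Y XDir.W else GE.dist Y XDir.W
      | .E => if eW = GW.dist Y XDir.E then GE.dist Y XDir.E else GW.dist Y XDir.E)
    eW eE GW GE

/-- The inductive notion of construction (of a global K-graph). -/
inductive IsConstruction : CTree → Prop
  | leaf (D : DG) (ε : DistE) (h : IsBasicK D ε) : IsConstruction (.leaf D ε)
  | node (D : DG) (ε : DistE) (eW eE : ℕ × ℕ) (GW GE : CTree)
      (hW : IsConstruction GW) (hE : IsConstruction GE)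
      (hdisj : Disjoint GW.rootGraph.verts GE.rootGraph.verts)
      (heW : GW.rootGraph.funcEEdge eW)
      (heE : GE.rootGraph.funcWEdge eE)
      (hD : D = DG.cut GW.rootGraph GE.rootGraph eW eE)
      (hXYC : ∀ Y : YDir, eW = GW.dist Y XDir.E ∨ eE = GE.dist Y XDir.W)
      (hεW : ∀ Y : YDir, ε Y XDir.W =
        if eE = GE.dist Y XDir.W then GW.dist Y XDir.W else GE.dist Y XDir.W)
      (hεE : ∀ Y : YDir, ε Y XDir.E =
        if eW = GW.dist Y XDir.E then GE.dist Y XDir.E else GW.dist Y XDir.E) :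
      IsConstruction (.node D ε eW eE GW GE)

/-- The inductive notion of construction of a global Q-graph: as
`IsConstruction` but with basic Q-graphs at the leaves. -/
inductive IsConstructionQ : CTree → Prop
  | leaf (D : DG) (ε : DistE) (h : IsBasicQ D ε) : IsConstructionQ (.leaf D ε)
  | node (D : DG) (ε : DistE) (eW eE : ℕ × ℕ) (GW GE : CTree)
      (hW : IsConstructionQ GW) (hE : IsConstructionQ GE)
      (hdisj : Disjoint GW.rootGraph.verts GE.rootGraph.verts)
      (heW : GW.rootGraph.funcEEdge eW)
      (heE : GE.rootGraph.funcWEdge eE)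
      (hD : D = DG.cut GW.rootGraph GE.rootGraph eW eE)
      (hXYC : ∀ Y : YDir, eW = GW.dist Y XDir.E ∨ eE = GE.dist Y XDir.W)
      (hεW : ∀ Y : YDir, ε Y XDir.W =
        if eE = GE.dist Y XDir.W then GW.dist Y XDir.W else GE.dist Y XDir.W)
      (hεE : ∀ Y : YDir, ε Y XDir.E =
        if eW = GW.dist Y XDir.E then GE.dist Y XDir.E else GW.dist Y XDir.E) :
      IsConstructionQ (.node D ε eW eE GW GE)

/-- ρ-equivalence of constructions: the least equivalence relation containing
ρ1, ρ2, ρ3 and closed under congruence with respect to cuts. -/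
inductive RhoEquiv : CTree → CTree → Prop
  | rho1 (P Q R : CTree) (eW eE fW fE : ℕ × ℕ)
      (hP : IsConstruction P) (hQ : IsConstruction Q) (hR : IsConstruction R)
      (heW : P.rootGraph.isEEdge eW) (hfW : Q.rootGraph.isEEdge fW)
      (heE : Q.rootGraph.isWEdge eE) (hfE : R.rootGraph.isWEdge fE)
      (h1 : IsConstruction (mkNode (mkNode P Q eW eE) R fW fE))
      (h2 : IsConstruction (mkNode P (mkNode Q R fW fE) eW eE)) :
      RhoEquiv (mkNode (mkNode P Q eW eE) R fW fE)
               (mkNode P (mkNode Q R fW fE) eW eE)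
  | rho2 (P Q R : CTree) (eW eE fW fE : ℕ × ℕ)
      (hP : IsConstruction P) (hQ : IsConstruction Q) (hR : IsConstruction R)
      (heW : P.rootGraph.isEEdge eW) (hfW : P.rootGraph.isEEdge fW)
      (hne : eW ≠ fW)
      (heE : Q.rootGraph.isWEdge eE) (hfE : R.rootGraph.isWEdge fE)
      (h1 : IsConstruction (mkNode (mkNode P Q eW eE) R fW fE))
      (h2 : IsConstruction (mkNode (mkNode P R fW fE) Q eW eE)) :
      RhoEquiv (mkNode (mkNode P Q eW eE) R fW fE)
               (mkNode (mkNode P R fW fE) Q eW eE)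
  | rho3 (P Q R : CTree) (eW eE fW fE : ℕ × ℕ)
      (hP : IsConstruction P) (hQ : IsConstruction Q) (hR : IsConstruction R)
      (heE : P.rootGraph.isWEdge eE) (hfE : P.rootGraph.isWEdge fE)
      (hne : eE ≠ fE)
      (heW : Q.rootGraph.isEEdge eW) (hfW : R.rootGraph.isEEdge fW)
      (h1 : IsConstruction (mkNode R (mkNode Q P eW eE) fW fE))
      (h2 : IsConstruction (mkNode Q (mkNode R P fW fE) eW eE)) :
      RhoEquiv (mkNode R (mkNode Q P eW eE) fW fE)
               (mkNode Q (mkNode R P fW fE) eW eE)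
  | congr (G1 G2 H1 H2 : CTree) (eW eE : ℕ × ℕ)
      (h12 : RhoEquiv G1 G2) (h34 : RhoEquiv H1 H2)
      (hc1 : IsConstruction (mkNode G1 H1 eW eE))
      (hc2 : IsConstruction (mkNode G2 H2 eW eE)) :
      RhoEquiv (mkNode G1 H1 eW eE) (mkNode G2 H2 eW eE)
  | refl (G : CTree) (h : IsConstruction G) : RhoEquiv G G
  | symm {G H : CTree} (h : RhoEquiv G H) : RhoEquiv H G
  | trans {G H K : CTree} (h1 : RhoEquiv G H) (h2 : RhoEquiv H K) :
      RhoEquiv G K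

/-- The class `[G]`: all constructions with the same root graph as `G` whose
leaves are determined by the same basic K-graphs as those of `G`. -/
def classOf (G : CTree) : Set CTree :=
  {H | IsConstruction H ∧ H.rootGraph = G.rootGraph ∧
    ∀ p : DG × DistE, p ∈ H.leaves ↔ p ∈ G.leaves}

/-- Renaming the vertices of a digraph along a function. -/
def DG.rename (f : ℕ → ℕ) (D : DG) : DG where
  verts := D.verts.image f
  edges := D.edges.image (fun e => (f e.1, f e.2))

/-- Renaming the vertices throughout a tree. -/
def CTree.rename (f : ℕ → ℕ) : CTree → CTree
  | .leaf D ε => .leaf (DG.rename f D) (fun Y X => (f (ε Y X).1, f (ε Y X).2))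
  | .node D ε eW eE l r =>
      .node (DG.rename f D) (fun Y X => (f (ε Y X).1, f (ε Y X).2))
        (f eW.1, f eW.2) (f eE.1, f eE.2) (l.rename f) (r.rename f)

/-- σ-equivalence: `H` is obtained from `G` by a bijective renaming of
vertices that fixes the root vertices (so only secondary vertices may be
renamed). -/
def SigmaEquiv (G H : CTree) : Prop :=
  ∃ f : ℕ ≃ ℕ, (∀ v ∈ G.rootGraph.verts, f v = v) ∧ H = G.rename f

/-- The global compass graph `‖G‖`: all constructions σ-equivalent to a
construction in `[G]`. -/
def normClass (G : CTree) : Set CTree :=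
  {H | ∃ K ∈ classOf G, SigmaEquiv K H}

/-- The labelling `L` of `λ(G) = ⟨D, L⟩`, defined by induction on `G`: at a
leaf given by a basic K-graph with inner vertex `b`, `YX(b) = YX(B)`; at a
node, the value is inherited from the appropriate subtree unless it is one of
the two cut edges, in which case it is the new edge introduced by the cut. -/
def lamG : CTree → Lab
  | .leaf _ ε => fun _ => ε
  | .node _ _ eW eE l r => fun a Y X =>
      let v := if a ∈ l.rootGraph.verts then lamG l a Y X else lamG r a Y X
      if v = eW ∨ v = eE then (eW.1, eE.2) else v

/-- `L` assigns to every inner vertex `a` edges `L a Y W` ending in `a` and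
edges `L a Y E` beginning in `a`. -/
def ProperLab (D : DG) (L : Lab) : Prop :=
  ∀ a, D.isInner a → ∀ Y : YDir,
    L a Y XDir.W ∈ D.edges ∧ (L a Y XDir.W).2 = a ∧
    L a Y XDir.E ∈ D.edges ∧ (L a Y XDir.E).1 = a

/-- `⟨D, L⟩` separates `N` from `S`. -/
def SeparatesNS (D : DG) (L : Lab) : Prop :=
  ∀ a, D.isInner a →
    (2 ≤ (D.edges.filter (fun e => e.2 = a)).card →
      L a YDir.N XDir.W ≠ L a YDir.S XDir.W) ∧
    (2 ≤ (D.edges.filter (fun e => e.1 = a)).card →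
      L a YDir.N XDir.E ≠ L a YDir.S XDir.E)

/-- A list `a_1, ..., a_n` is `Y`-decent in `⟨D, L⟩`: `n = 1`, or
`YE(a_1) = (a_1, a_2)`, or `YW(a_n) = (a_{n-1}, a_n)`. -/
def Ydecent (L : Lab) (Y : YDir) (l : List ℕ) : Prop :=
  ∀ a b t, l = a :: b :: t →
    (L a Y XDir.E = (a, b) ∨
      ∃ c d t', l.reverse = d :: c :: t' ∧ L d Y XDir.W = (c, d))

/-- `⟨D, L⟩` is a local compass graph. -/
def IsLocalCompass (D : DG) (L : Lab) : Prop :=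
  D.IsOriented ∧ ProperLab D L ∧
  D.WeaklyConnected ∧ D.Asemicyclic ∧ D.WEFunctional ∧ (∃ a, D.isInner a) ∧
  SeparatesNS D L ∧
  (∀ l, D.IsPath l → Ydecent L YDir.N l ∧ Ydecent L YDir.S l)

/-- A path (list) covers an edge `g` when `g` is a pair of consecutive
vertices of the list. -/
def covers (l : List ℕ) (g : ℕ × ℕ) : Prop := g ∈ l.zip l.tail

/-- A `YX`-edge in `⟨D, L⟩`. -/
def YXedge (D : DG) (L : Lab) (Y : YDir) : XDir → (ℕ × ℕ) → Prop
  | .W, g => g ∈ D.edges ∧ (L g.2 Y XDir.W = g ∨ D.isEEdge g)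
  | .E, g => g ∈ D.edges ∧ (L g.1 Y XDir.E = g ∨ D.isWEdge g)

/-- A proper semipath: a semipath such that neither it nor its reverse is a
path. -/
def ProperSemipath (D : DG) (l : List ℕ) : Prop :=
  D.IsSemipath l ∧ ¬ D.IsPath l ∧ ¬ D.IsPath l.reverse

/-- A transversal edge `(a,b)`: there is a proper semipath beginning with
`a, b` and a proper semipath beginning with `b, a`. -/
def Transversal (D : DG) (e : ℕ × ℕ) : Prop :=
  e ∈ D.edges ∧
  (∃ t, ProperSemipath D (e.1 :: e.2 :: t)) ∧
  (∃ t, ProperSemipath D (e.2 :: e.1 :: t))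

/-- The edge of `D` that connects two semi-adjacent vertices `a` and `b`. -/
def connEdge (D : DG) (a b : ℕ) : ℕ × ℕ :=
  if (a, b) ∈ D.edges then (a, b) else (b, a)

/-- The connecting edges of a list: the edges connecting its consecutive
vertices. -/
def connEdges (D : DG) (l : List ℕ) (e : ℕ × ℕ) : Prop :=
  ∃ p ∈ l.zip l.tail, e = connEdge D p.1 p.2

/-- A bifurcation: three distinct edges with a common vertex. -/
def Bifurcation (D : DG) (e1 e2 e3 : ℕ × ℕ) : Prop :=
  e1 ∈ D.edges ∧ e2 ∈ D.edges ∧ e3 ∈ D.edges ∧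
  e1 ≠ e2 ∧ e1 ≠ e3 ∧ e2 ≠ e3 ∧
  ∃ v, (v = e1.1 ∨ v = e1.2) ∧ (v = e2.1 ∨ v = e2.2) ∧ (v = e3.1 ∨ v = e3.2)

/-- A K-graph: a weakly connected, asemicyclic, `W`-`E`-functional oriented
graph with an inner vertex in which no bifurcation is transversal. -/
def IsKGraph (D : DG) : Prop :=
  D.IsOriented ∧ D.WeaklyConnected ∧ D.Asemicyclic ∧ D.WEFunctional ∧
  (∃ a, D.isInner a) ∧
  ∀ e1 e2 e3, Bifurcation D e1 e2 e3 →
    ¬ (Transversal D e1 ∧ Transversal D e2 ∧ Transversal D e3)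

/-- A Q-graph: a weakly connected, asemicyclic, `W`-`E`-functional oriented
graph with an inner vertex. -/
def IsQGraph (D : DG) : Prop :=
  D.IsOriented ∧ D.WeaklyConnected ∧ D.Asemicyclic ∧ D.WEFunctional ∧
  ∃ a, D.isInner a

/-!
The `W`-distinguished edges of a construction end in inner vertices of its root graph and the
`E`-distinguished edges begin in one; this survives cuts, since the cut only removes `E`- and
`W`-vertices. In particular the distinguished edges of a construction have their relevant endpoint
in its root graph, so by disjointness of the pieces a cut edge of one piece never coincides with a
distinguished edge of another. Under this constraint the case distinctions of (XYD) on the two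
sides of ρ1, ρ2 and ρ3 select the same edge, and (XYD) is a congruence for the remaining rules.
-/

namespace DG

@[simp]
lemma mem_cut_verts {DW DE : DG} {eW eE : ℕ × ℕ} {v : ℕ} :
    v ∈ (cut DW DE eW eE).verts ↔
      (v ∈ DW.verts ∨ v ∈ DE.verts) ∧ v ≠ eW.2 ∧ v ≠ eE.1 := by
  simp [cut]

@[simp]
lemma mem_cut_edges {DW DE : DG} {eW eE g : ℕ × ℕ} :
    g ∈ (cut DW DE eW eE).edges ↔
      g = (eW.1, eE.2) ∨ (g ≠ eW ∧ g ∈ DW.edges) ∨ (g ≠ eE ∧ g ∈ DE.edges) := by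
  simp [cut]

def IsEdgeToInner (D : DG) (g : ℕ × ℕ) : Prop :=
  g ∈ D.edges ∧ g.1 ∈ D.verts ∧ D.isInner g.2

def IsEdgeFromInner (D : DG) (g : ℕ × ℕ) : Prop :=
  g ∈ D.edges ∧ D.isInner g.1 ∧ g.2 ∈ D.verts

variable {DW DE : DG} {eW eE g : ℕ × ℕ}

lemma IsEdgeToInner.cut_left (hg : DW.IsEdgeToInner g) (heW : DW.isEEdge eW)
    (heE : eE.1 ∈ DE.verts) (hdisj : Disjoint DW.verts DE.verts) :
    (cut DW DE eW eE).IsEdgeToInner g := by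
  obtain ⟨hg, hg1, hg2, -, c, hc⟩ := hg
  obtain ⟨-, -, hnout⟩ := heW
  have hg2W : g.2 ≠ eW.2 := fun h => hnout c (h ▸ hc)
  have hg1W : g.1 ≠ eW.2 := fun h => hnout g.2 (h ▸ hg)
  have hgW : g ≠ eW := fun h => hg2W (h ▸ rfl)
  have hgcut : g ∈ (cut DW DE eW eE).edges := by simp [hg, hgW]
  refine ⟨hgcut, ?_, ?_, ⟨g.1, hgcut⟩, ?_⟩
  · simp [hg1, hg1W, hdisj.forall_ne_finset hg1 heE]
  · simp [hg2, hg2W, hdisj.forall_ne_finset hg2 heE]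
  · by_cases hcW : (g.2, c) = eW
    · exact ⟨eE.2, by simp [← hcW]⟩
    · exact ⟨c, by simp [hc, hcW]⟩

lemma IsEdgeToInner.cut_right (hg : DE.IsEdgeToInner g) (hgE : g ≠ eE)
    (heE : DE.funcWEdge eE) (heW : eW.2 ∈ DW.verts)
    (hdisj : Disjoint DW.verts DE.verts) :
    (cut DW DE eW eE).IsEdgeToInner g := by
  obtain ⟨hg, hg1, hg2, -, c, hc⟩ := hg
  obtain ⟨⟨-, -, hnin⟩, hfun⟩ := heE
  have hg1E : g.1 ≠ eE.1 := fun h => hgE (Prod.ext h (hfun g.2 (h ▸ hg)))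
  have hg2E : g.2 ≠ eE.1 := fun h => hnin g.1 (h ▸ hg)
  have hgcut : g ∈ (cut DW DE eW eE).edges := by simp [hg, hgE]
  refine ⟨hgcut, ?_, ?_, ⟨g.1, hgcut⟩, c, ?_⟩
  · simp [hg1, hg1E, (hdisj.forall_ne_finset heW hg1).symm]
  · simp [hg2, hg2E, (hdisj.forall_ne_finset heW hg2).symm]
  · have hcE : (g.2, c) ≠ eE := fun h => hg2E (h ▸ rfl)
    simp [hc, hcE]

lemma IsEdgeFromInner.cut_right (hg : DE.IsEdgeFromInner g) (heE : DE.isWEdge eE)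
    (heW : eW.2 ∈ DW.verts) (hdisj : Disjoint DW.verts DE.verts) :
    (cut DW DE eW eE).IsEdgeFromInner g := by
  obtain ⟨hg, ⟨hg1, ⟨c, hc⟩, -⟩, hg2⟩ := hg
  obtain ⟨-, -, hnin⟩ := heE
  have hg1E : g.1 ≠ eE.1 := fun h => hnin c (h ▸ hc)
  have hg2E : g.2 ≠ eE.1 := fun h => hnin g.1 (h ▸ hg)
  have hgE : g ≠ eE := fun h => hg1E (h ▸ rfl)
  have hgcut : g ∈ (cut DW DE eW eE).edges := by simp [hg, hgE]
  refine ⟨hgcut, ⟨?_, ?_, ⟨g.2, hgcut⟩⟩, ?_⟩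
  · simp [hg1, hg1E, (hdisj.forall_ne_finset heW hg1).symm]
  · by_cases hcE : (c, g.1) = eE
    · exact ⟨eW.1, by simp [← hcE]⟩
    · exact ⟨c, by simp [hc, hcE]⟩
  · simp [hg2, hg2E, (hdisj.forall_ne_finset heW hg2).symm]

lemma IsEdgeFromInner.cut_left (hg : DW.IsEdgeFromInner g) (hgW : g ≠ eW)
    (heW : DW.funcEEdge eW) (heE : eE.1 ∈ DE.verts)
    (hdisj : Disjoint DW.verts DE.verts) :
    (cut DW DE eW eE).IsEdgeFromInner g := by
  obtain ⟨hg, ⟨hg1, ⟨c, hc⟩, -⟩, hg2⟩ := hg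
  obtain ⟨⟨-, -, hnout⟩, hfun⟩ := heW
  have hg2W : g.2 ≠ eW.2 := fun h => hgW (Prod.ext (hfun g.1 (h ▸ hg)) h)
  have hg1W : g.1 ≠ eW.2 := fun h => hnout g.2 (h ▸ hg)
  have hgcut : g ∈ (cut DW DE eW eE).edges := by simp [hg, hgW]
  refine ⟨hgcut, ⟨?_, ⟨c, ?_⟩, ⟨g.2, hgcut⟩⟩, ?_⟩
  · simp [hg1, hg1W, hdisj.forall_ne_finset hg1 heE]
  · have hcW : (c, g.1) ≠ eW := fun h => hg1W (h ▸ rfl)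
    simp [hc, hcW]
  · simp [hg2, hg2W, hdisj.forall_ne_finset hg2 heE]

end DG

@[simp]
lemma dist_mkNode_W (GW GE : CTree) (eW eE : ℕ × ℕ) (Y : YDir) :
    (mkNode GW GE eW eE).dist Y .W =
      if eE = GE.dist Y .W then GW.dist Y .W else GE.dist Y .W := rfl

@[simp]
lemma dist_mkNode_E (GW GE : CTree) (eW eE : ℕ × ℕ) (Y : YDir) :
    (mkNode GW GE eW eE).dist Y .E =
      if eW = GW.dist Y .E then GE.dist Y .E else GW.dist Y .E := rfl

lemma dist_mkNode_congr {G₁ G₂ H₁ H₂ : CTree} (hG : G₁.dist = G₂.dist)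
    (hH : H₁.dist = H₂.dist) (eW eE : ℕ × ℕ) :
    (mkNode G₁ H₁ eW eE).dist = (mkNode G₂ H₂ eW eE).dist := by
  funext Y X
  cases X <;> simp only [dist_mkNode_W, dist_mkNode_E, hG, hH]

namespace IsConstruction

variable {GW GE : CTree} {eW eE : ℕ × ℕ}

lemma of_mkNode_left (h : IsConstruction (mkNode GW GE eW eE)) : IsConstruction GW := by
  cases h; assumption

lemma of_mkNode_right (h : IsConstruction (mkNode GW GE eW eE)) : IsConstruction GE := by
  cases h; assumption

lemma disjoint_of_mkNode (h : IsConstruction (mkNode GW GE eW eE)) :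
    Disjoint GW.rootGraph.verts GE.rootGraph.verts := by
  cases h; assumption

lemma xyc_of_mkNode (h : IsConstruction (mkNode GW GE eW eE)) (Y : YDir) :
    eW = GW.dist Y .E ∨ eE = GE.dist Y .W := by
  cases h with
  | node _ _ _ _ _ _ _ _ _ _ _ _ hXYC => exact hXYC Y

lemma isEdgeToInner_dist_and_isEdgeFromInner_dist {G : CTree} (h : IsConstruction G) (Y : YDir) :
    G.rootGraph.IsEdgeToInner (G.dist Y .W) ∧
      G.rootGraph.IsEdgeFromInner (G.dist Y .E) := by
  induction h with
  | leaf D ε h =>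
    obtain ⟨hor, b, hb, -, -, hin, hout, hε, -⟩ := h
    obtain ⟨hW, hW2, hE, hE1⟩ := hε Y
    exact ⟨⟨hW, (hor.1 _ hW).1, hW2 ▸ ⟨hb, hin, hout⟩⟩,
      ⟨hE, hE1 ▸ ⟨hb, hin, hout⟩, (hor.1 _ hE).2⟩⟩
  | node D ε eW eE GW GE _ _ hdisj heW heE hD _ hεW hεE ihW ihE =>
    change D.IsEdgeToInner (ε Y .W) ∧ D.IsEdgeFromInner (ε Y .E)
    have heW2 : eW.2 ∈ GW.rootGraph.verts := heW.1.2.1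
    have heE1 : eE.1 ∈ GE.rootGraph.verts := heE.1.2.1
    subst hD
    rw [hεW, hεE]
    constructor
    · split_ifs with hE
      · exact ihW.1.cut_left heW.1 heE1 hdisj
      · exact ihE.1.cut_right (Ne.symm hE) heE heW2 hdisj
    · split_ifs with hW
      · exact ihE.2.cut_right heE.1 heW2 hdisj
      · exact ihW.2.cut_left (Ne.symm hW) heW heE1 hdisj

lemma ne_dist_W {G : CTree} (hG : IsConstruction G) {s : Finset ℕ}
    (hs : Disjoint s G.rootGraph.verts) {e : ℕ × ℕ} (he : e.1 ∈ s) (Y : YDir) :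
    e ≠ G.dist Y .W := by
  rintro rfl
  exact hs.forall_ne_finset he (hG.isEdgeToInner_dist_and_isEdgeFromInner_dist Y).1.2.1 rfl

lemma ne_dist_E {G : CTree} (hG : IsConstruction G) {s : Finset ℕ}
    (hs : Disjoint s G.rootGraph.verts) {e : ℕ × ℕ} (he : e.2 ∈ s) (Y : YDir) :
    e ≠ G.dist Y .E := by
  rintro rfl
  exact hs.forall_ne_finset he (hG.isEdgeToInner_dist_and_isEdgeFromInner_dist Y).2.2.2 rfl

end IsConstruction

section Rho

variable {P Q R : CTree} {eW eE fW fE : ℕ × ℕ}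

lemma dist_rho1 (hP : IsConstruction P) (hR : IsConstruction R)
    (hPQ : Disjoint P.rootGraph.verts Q.rootGraph.verts)
    (hQR : Disjoint Q.rootGraph.verts R.rootGraph.verts)
    (heE : eE.1 ∈ Q.rootGraph.verts) (hfW : fW.2 ∈ Q.rootGraph.verts) :
    (mkNode (mkNode P Q eW eE) R fW fE).dist = (mkNode P (mkNode Q R fW fE) eW eE).dist := by
  funext Y X
  cases X
  · have heER := hR.ne_dist_W hQR heE Y
    by_cases hf : fE = R.dist Y .W <;> simp [hf, heER]
  · have hfWP := hP.ne_dist_E hPQ.symm hfW Y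
    by_cases he : eW = P.dist Y .E <;> simp [he, hfWP]

lemma dist_rho2 (hQ : IsConstruction Q) (hR : IsConstruction R)
    (hPQ : Disjoint P.rootGraph.verts Q.rootGraph.verts)
    (hPR : Disjoint P.rootGraph.verts R.rootGraph.verts)
    (heW : eW.2 ∈ P.rootGraph.verts) (hfW : fW.2 ∈ P.rootGraph.verts) (hne : eW ≠ fW)
    (hin : ∀ Y, eW = P.dist Y .E ∨ eE = Q.dist Y .W)
    (hout : ∀ Y, fW = (mkNode P Q eW eE).dist Y .E ∨ fE = R.dist Y .W) :
    (mkNode (mkNode P Q eW eE) R fW fE).dist = (mkNode (mkNode P R fW fE) Q eW eE).dist := by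
  funext Y X
  have hfWQ := hQ.ne_dist_E hPQ hfW Y
  cases X
  · have hcut : eE = Q.dist Y .W ∨ fE = R.dist Y .W := by
      rcases hin Y with heP | he
      · exact Or.inr ((hout Y).resolve_left (by simpa [heP] using hfWQ))
      · exact Or.inl he
    rcases hcut with he | hf
    · by_cases hf : fE = R.dist Y .W <;> simp [he, hf]
    · by_cases he : eE = Q.dist Y .W <;> simp [he, hf]
  · have heWR := hR.ne_dist_E hPR heW Y
    by_cases he : eW = P.dist Y .E
    · have hfP : fW ≠ P.dist Y .E := fun hf => hne (he.trans hf.symm)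
      simp [he, hfP, hfWQ]
    · by_cases hf : fW = P.dist Y .E <;> simp [he, hf, heWR]

lemma dist_rho3 (hQ : IsConstruction Q) (hR : IsConstruction R)
    (hQP : Disjoint Q.rootGraph.verts P.rootGraph.verts)
    (hRP : Disjoint R.rootGraph.verts P.rootGraph.verts)
    (heE : eE.1 ∈ P.rootGraph.verts) (hfE : fE.1 ∈ P.rootGraph.verts) (hne : eE ≠ fE)
    (hin : ∀ Y, eW = Q.dist Y .E ∨ eE = P.dist Y .W)
    (hout : ∀ Y, fW = R.dist Y .E ∨ fE = (mkNode Q P eW eE).dist Y .W) :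
    (mkNode R (mkNode Q P eW eE) fW fE).dist = (mkNode Q (mkNode R P fW fE) eW eE).dist := by
  funext Y X
  have hfEQ := hQ.ne_dist_W hQP.symm hfE Y
  cases X
  · have heER := hR.ne_dist_W hRP.symm heE Y
    by_cases he : eE = P.dist Y .W
    · have hfP : fE ≠ P.dist Y .W := fun hf => hne (he.trans hf.symm)
      simp [he, hfP, hfEQ]
    · by_cases hf : fE = P.dist Y .W <;> simp [he, hf, heER]
  · have hcut : eW = Q.dist Y .E ∨ fW = R.dist Y .E := by
      rcases hin Y with he | heP
      · exact Or.inl he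
      · exact Or.inr ((hout Y).resolve_right (by simpa [heP] using hfEQ))
    rcases hcut with he | hf
    · by_cases hf : fW = R.dist Y .E <;> simp [he, hf]
    · by_cases he : eW = Q.dist Y .E <;> simp [he, hf]

end Rho

lemma RhoEquiv.dist_eq {G H : CTree} (h : RhoEquiv G H) : G.dist = H.dist := by
  induction h with
  | rho1 P Q R eW eE fW fE hP _ hR _ hfW heE _ h1 h2 =>
    exact dist_rho1 hP hR h1.of_mkNode_left.disjoint_of_mkNode
      h2.of_mkNode_right.disjoint_of_mkNode heE.2.1 hfW.2.1
  | rho2 P Q R eW eE fW fE _ hQ hR heW hfW hne _ _ h1 h2 =>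
    exact dist_rho2 hQ hR h1.of_mkNode_left.disjoint_of_mkNode
      h2.of_mkNode_left.disjoint_of_mkNode heW.2.1 hfW.2.1 hne
      h1.of_mkNode_left.xyc_of_mkNode h1.xyc_of_mkNode
  | rho3 P Q R eW eE fW fE _ hQ hR heE hfE hne _ _ h1 h2 =>
    exact dist_rho3 hQ hR h1.of_mkNode_right.disjoint_of_mkNode
      h2.of_mkNode_right.disjoint_of_mkNode heE.2.1 hfE.2.1 hne
      h1.of_mkNode_right.xyc_of_mkNode h1.xyc_of_mkNode
  | congr _ _ _ _ eW eE _ _ _ _ ih₁ ih₂ => exact dist_mkNode_congr ih₁ ih₂ eW eE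
  | refl => rfl
  | symm _ ih => exact ih.symm
  | trans _ _ ih₁ ih₂ => exact ih₁.trans ih₂

/-- Proposition 2.6: if constructions `G` and `H` are ρ-equivalent, then
`YX(G) = YX(H)` for every `X ∈ {W, E}` and `Y ∈ {N, S}`. -/
theorem prop_2_6 (G H : CTree) (h : RhoEquiv G H) :
    ∀ (Y : YDir) (X : XDir), G.dist Y X = H.dist Y X :=
  fun Y X => congrFun (congrFun h.dist_eq Y) X

end PluralCuts
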